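/- For any r ∈ [1/2, (√3−1)/√2) and any n, there exists a set of n points of diameter at most 1 in which every closed disc of radius r contains at most ⌈3n/5⌉ points; hence N_n(r) ≤ ⌈3n/5⌉ on this interval. -/

import Mathlib

open Metric
open scoped Classical

noncomputable def rtPt (a b : ℝ) : EuclideanSpace ℝ (Fin 2) := WithLp.toLp 2 ![a, b]

noncomputable def rtPts : Fin 5 → EuclideanSpace ℝ (Fin 2) :=
  ![rtPt 0 (Real.sqrt 3 / 2), rtPt (-(1/2)) 0, rtPt (1/2) 0,
    rtPt ((1 - Real.sqrt 3)/2) (1/2), rtPt ((Real.sqrt 3 - 1)/2) (1/2)]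

lemma rt_dist_sq (c : EuclideanSpace ℝ (Fin 2)) (a b : ℝ) :
    dist c (rtPt a b) ^ 2 = (c 0 - a)^2 + (c 1 - b)^2 := by
  rw [EuclideanSpace.dist_eq, Real.sq_sqrt (by positivity)]
  simp [Fin.sum_univ_two, rtPt, Real.dist_eq, sq_abs]

lemma rt_mem_sq {c : EuclideanSpace ℝ (Fin 2)} {r a b : ℝ}
    (h : rtPt a b ∈ closedBall c r) :
    (c 0 - a)^2 + (c 1 - b)^2 ≤ r^2 := by
  rw [mem_closedBall, dist_comm] at h
  have h2 := rt_dist_sq c a b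
  nlinarith [dist_nonneg (x := c) (y := rtPt a b), dist_nonneg (x := rtPt a b) (y := c)]

lemma rt_sqrt3_sq : Real.sqrt 3 ^ 2 = 3 := Real.sq_sqrt (by norm_num)

lemma rt_geo1 (x y r s : ℝ) (hs : s^2 = 3) (hsp : 0 ≤ s) (hr2 : r^2 < 2 - s)
    (h0 : (x - 0)^2 + (y - s/2)^2 ≤ r^2) (h1 : (x - -(1/2))^2 + (y - 0)^2 ≤ r^2)
    (h2 : (x - 1/2)^2 + (y - 0)^2 ≤ r^2) : False := by
  nlinarith [sq_nonneg x, sq_nonneg (6*y - s), sq_nonneg (s - 5/3)]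

lemma rt_geo2 (x y r s : ℝ) (hs : s^2 = 3) (hsp : 0 ≤ s) (hr2 : r^2 < 2 - s)
    (h0 : (x - 0)^2 + (y - s/2)^2 ≤ r^2) (h1 : (x - -(1/2))^2 + (y - 0)^2 ≤ r^2)
    (h4 : (x - (s-1)/2)^2 + (y - 1/2)^2 ≤ r^2) : False := by
  have hs2 : s < 2 := by nlinarith
  have hs1 : 3/2 < s := by nlinarith
  have k1 := mul_le_mul_of_nonneg_left h0 (by linarith : (0:ℝ) ≤ 2 - s)
  have k2 := mul_le_mul_of_nonneg_left h1 (by linarith : (0:ℝ) ≤ 2*s - 3)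
  have k3 := mul_le_mul_of_nonneg_left h4 (by linarith : (0:ℝ) ≤ 2 - s)
  have e1 : (2-s) * ((x - 0)^2 + (y - s/2)^2) + (2*s-3) * ((x - -(1/2))^2 + (y - 0)^2)
      + (2-s) * ((x - (s-1)/2)^2 + (y - 1/2)^2)
      = (x + (2-s)/2)^2 + (y - (s-1)/2)^2 + (2 - s) := by
    linear_combination (1 + x + y - s/2) * hs
  nlinarith [sq_nonneg (x + (2-s)/2), sq_nonneg (y - (s-1)/2)]

lemma rt_geo3 (x y r s : ℝ) (hs : s^2 = 3) (hsp : 0 ≤ s) (hr2 : r^2 < 2 - s)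
    (h0 : (x - 0)^2 + (y - s/2)^2 ≤ r^2) (h2 : (x - 1/2)^2 + (y - 0)^2 ≤ r^2)
    (h3 : (x - (1-s)/2)^2 + (y - 1/2)^2 ≤ r^2) : False := by
  have hs2 : s < 2 := by nlinarith
  have hs1 : 3/2 < s := by nlinarith
  have k1 := mul_le_mul_of_nonneg_left h0 (by linarith : (0:ℝ) ≤ 2 - s)
  have k2 := mul_le_mul_of_nonneg_left h2 (by linarith : (0:ℝ) ≤ 2*s - 3)
  have k3 := mul_le_mul_of_nonneg_left h3 (by linarith : (0:ℝ) ≤ 2 - s)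
  have e1 : (2-s) * ((x - 0)^2 + (y - s/2)^2) + (2*s-3) * ((x - 1/2)^2 + (y - 0)^2)
      + (2-s) * ((x - (1-s)/2)^2 + (y - 1/2)^2)
      = (x - (2-s)/2)^2 + (y - (s-1)/2)^2 + (2 - s) := by
    linear_combination (1 - x + y - s/2) * hs
  nlinarith [sq_nonneg (x - (2-s)/2), sq_nonneg (y - (s-1)/2)]

lemma rt_geo4 (x y r s : ℝ) (hs : s^2 = 3) (hsp : 0 ≤ s) (hr2 : r^2 < 2 - s)
    (h1 : (x - -(1/2))^2 + (y - 0)^2 ≤ r^2) (h2 : (x - 1/2)^2 + (y - 0)^2 ≤ r^2)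
    (h3 : (x - (1-s)/2)^2 + (y - 1/2)^2 ≤ r^2)
    (h4 : (x - (s-1)/2)^2 + (y - 1/2)^2 ≤ r^2) : False := by
  have hs2 : s < 2 := by nlinarith
  have hs1 : 3/2 < s := by nlinarith
  have k1 := mul_le_mul_of_nonneg_left h1 (by linarith : (0:ℝ) ≤ (s-1)/2)
  have k2 := mul_le_mul_of_nonneg_left h2 (by linarith : (0:ℝ) ≤ (s-1)/2)
  have k3 := mul_le_mul_of_nonneg_left h3 (by linarith : (0:ℝ) ≤ (2-s)/2)
  have k4 := mul_le_mul_of_nonneg_left h4 (by linarith : (0:ℝ) ≤ (2-s)/2)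
  have e1 : (s-1)/2 * ((x - -(1/2))^2 + (y - 0)^2) + (s-1)/2 * ((x - 1/2)^2 + (y - 0)^2)
      + (2-s)/2 * ((x - (1-s)/2)^2 + (y - 1/2)^2)
      + (2-s)/2 * ((x - (s-1)/2)^2 + (y - 1/2)^2)
      = x^2 + (y - (2-s)/2)^2 + (2 - s) := by
    linear_combination ((3-s)/4) * hs
  nlinarith [sq_nonneg x, sq_nonneg (y - (2-s)/2)]

lemma rt_decide : ∀ S : Finset (Fin 5),
    ¬({0,1,2} : Finset (Fin 5)) ⊆ S → ¬({0,1,4} : Finset (Fin 5)) ⊆ S →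
    ¬({0,2,3} : Finset (Fin 5)) ⊆ S → ¬({1,2,3,4} : Finset (Fin 5)) ⊆ S →
    ∀ t : Fin 5, S.card ≤ 3 ∧
      (S.filter (fun k => k.val < t.val)).card ≤ (3 * t.val + 4)/5 := by decide

lemma rt_range_count (k : ℕ) (hk5 : k < 5) (n : ℕ) :
    ((Finset.range n).filter (fun i => i % 5 = k)).card
      = n/5 + if k < n % 5 then 1 else 0 := by
  induction n with
  | zero => simp
  | succ m ih =>
    rw [Finset.range_add_one, Finset.filter_insert]
    by_cases h : m % 5 = k
    · rw [if_pos h, Finset.card_insert_of_notMem (by simp), ih,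
        if_neg (by omega : ¬ k < m % 5)]
      by_cases hk2 : k < (m+1) % 5
      · rw [if_pos hk2]; omega
      · rw [if_neg hk2]; omega
    · rw [if_neg h, ih]
      rcases Nat.lt_or_ge k (m % 5) with hk | hk
      · rw [if_pos hk]
        rcases Nat.lt_or_ge k ((m+1) % 5) with hk2 | hk2
        · rw [if_pos hk2]; omega
        · rw [if_neg (Nat.not_lt.2 hk2)]; omega
      · rw [if_neg (Nat.not_lt.2 hk)]
        rcases Nat.lt_or_ge k ((m+1) % 5) with hk2 | hk2
        · rw [if_pos hk2]; omega
        · rw [if_neg (Nat.not_lt.2 hk2)]; omega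

lemma rt_diam : ∀ k l : Fin 5, dist (rtPts k) (rtPts l) ≤ 1 := by
  have hs := rt_sqrt3_sq
  have hsp : (0:ℝ) ≤ Real.sqrt 3 := Real.sqrt_nonneg 3
  have key : ∀ a b a' b' : ℝ, (a - a')^2 + (b - b')^2 ≤ 1 →
      dist (rtPt a b) (rtPt a' b') ≤ 1 := by
    intro a b a' b' h
    have h2 := rt_dist_sq (rtPt a b) a' b'
    have h3 : rtPt a b 0 = a := rfl
    have h4 : rtPt a b 1 = b := rfl
    rw [h3, h4] at h2
    nlinarith [dist_nonneg (x := rtPt a b) (y := rtPt a' b')]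
  intro k l
  fin_cases k <;> fin_cases l <;>
    · show dist (rtPt _ _) (rtPt _ _) ≤ 1
      apply key
      nlinarith [hs, hsp, sq_nonneg (Real.sqrt 3 - 1)]

/-- For any `r ∈ [1/2, (√3-1)/√2)` and any `n`, there is a configuration of `n` points of
diameter at most 1 in which every closed disc of radius `r` contains at most `⌈3n/5⌉`
points; hence `N_n(r) ≤ ⌈3n/5⌉` on this interval. -/
theorem upper_bound_three_fifths (r : ℝ) (hr0 : 1 / 2 ≤ r)
    (hr1 : r < (Real.sqrt 3 - 1) / Real.sqrt 2) (n : ℕ) :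
    ∃ P : Fin n → EuclideanSpace ℝ (Fin 2),
      (∀ i j, dist (P i) (P j) ≤ 1) ∧
      ∀ c : EuclideanSpace ℝ (Fin 2),
        (Finset.univ.filter (fun i => P i ∈ closedBall c r)).card ≤ ⌈(3 * n : ℝ) / 5⌉₊ := by
  classical
  set s : ℝ := Real.sqrt 3 with hsdef
  have hs : s ^ 2 = 3 := rt_sqrt3_sq
  have hsp : (0:ℝ) ≤ s := Real.sqrt_nonneg 3
  have hrpos : (0:ℝ) ≤ r := le_trans (by norm_num) hr0
  -- r^2 < 2 - s
  have hr2 : r ^ 2 < 2 - s := by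
    have ht : Real.sqrt 2 ^ 2 = 2 := Real.sq_sqrt (by norm_num)
    have htp : (0:ℝ) < Real.sqrt 2 := Real.sqrt_pos.2 (by norm_num)
    rw [lt_div_iff₀ htp] at hr1
    nlinarith [mul_nonneg hrpos htp.le]
  set res : Fin n → Fin 5 := fun i => ⟨(i : ℕ) % 5, Nat.mod_lt _ (by norm_num)⟩ with hres
  refine ⟨fun i => rtPts (res i), fun i j => rt_diam _ _, fun c => ?_⟩
  set S : Finset (Fin 5) := Finset.univ.filter (fun k => rtPts k ∈ closedBall c r) with hS
  have hcov : ∀ k, k ∈ S → rtPts k ∈ closedBall c r := by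
    intro k hk
    exact (Finset.mem_filter.1 hk).2
  -- geometric exclusions
  have hbad1 : ¬({0,1,2} : Finset (Fin 5)) ⊆ S := by
    intro h
    exact rt_geo1 (c 0) (c 1) r s hs hsp hr2
      (rt_mem_sq (show rtPt 0 (s/2) ∈ _ from hcov 0 (h (by decide))))
      (rt_mem_sq (show rtPt (-(1/2)) 0 ∈ _ from hcov 1 (h (by decide))))
      (rt_mem_sq (show rtPt (1/2) 0 ∈ _ from hcov 2 (h (by decide))))
  have hbad2 : ¬({0,1,4} : Finset (Fin 5)) ⊆ S := by
    intro h
    exact rt_geo2 (c 0) (c 1) r s hs hsp hr2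
      (rt_mem_sq (show rtPt 0 (s/2) ∈ _ from hcov 0 (h (by decide))))
      (rt_mem_sq (show rtPt (-(1/2)) 0 ∈ _ from hcov 1 (h (by decide))))
      (rt_mem_sq (show rtPt ((s-1)/2) (1/2) ∈ _ from hcov 4 (h (by decide))))
  have hbad3 : ¬({0,2,3} : Finset (Fin 5)) ⊆ S := by
    intro h
    exact rt_geo3 (c 0) (c 1) r s hs hsp hr2
      (rt_mem_sq (show rtPt 0 (s/2) ∈ _ from hcov 0 (h (by decide))))
      (rt_mem_sq (show rtPt (1/2) 0 ∈ _ from hcov 2 (h (by decide))))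
      (rt_mem_sq (show rtPt ((1-s)/2) (1/2) ∈ _ from hcov 3 (h (by decide))))
  have hbad4 : ¬({1,2,3,4} : Finset (Fin 5)) ⊆ S := by
    intro h
    exact rt_geo4 (c 0) (c 1) r s hs hsp hr2
      (rt_mem_sq (show rtPt (-(1/2)) 0 ∈ _ from hcov 1 (h (by decide))))
      (rt_mem_sq (show rtPt (1/2) 0 ∈ _ from hcov 2 (h (by decide))))
      (rt_mem_sq (show rtPt ((1-s)/2) (1/2) ∈ _ from hcov 3 (h (by decide))))
      (rt_mem_sq (show rtPt ((s-1)/2) (1/2) ∈ _ from hcov 4 (h (by decide))))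
  obtain ⟨hcard3, hfilt⟩ := rt_decide S hbad1 hbad2 hbad3 hbad4
      ⟨n % 5, Nat.mod_lt _ (by norm_num)⟩
  -- counting
  have hfib : (Finset.univ.filter (fun i : Fin n => rtPts (res i) ∈ closedBall c r)).card
      = ∑ k ∈ S, (Finset.univ.filter (fun i : Fin n => res i = k)).card := by
    rw [Finset.card_eq_sum_card_fiberwise (f := res) (t := S)
      (fun i hi => Finset.mem_filter.2 ⟨Finset.mem_univ _, (Finset.mem_filter.1 hi).2⟩)]
    refine Finset.sum_congr rfl fun k hk => ?_
    congr 1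
    ext i
    simp only [Finset.mem_filter, Finset.mem_univ, true_and]
    constructor
    · rintro ⟨_, h⟩; exact h
    · rintro rfl; exact ⟨hcov _ hk, rfl⟩
  have hfib2 : ∀ k : Fin 5, (Finset.univ.filter (fun i : Fin n => res i = k)).card
      = n/5 + if (k : ℕ) < n % 5 then 1 else 0 := by
    intro k
    rw [← rt_range_count (k : ℕ) k.isLt n]
    have hpred : (Finset.univ.filter (fun i : Fin n => res i = k))
        = (Finset.univ.filter (fun i : Fin n => (i : ℕ) % 5 = (k : ℕ))) := by
      ext i
      simp [hres, Fin.ext_iff]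
    rw [hpred, Finset.card_filter, Finset.card_filter,
      Fin.sum_univ_eq_sum_range (fun i => if i % 5 = (k : ℕ) then 1 else 0)]
  have hsum : (Finset.univ.filter (fun i : Fin n => rtPts (res i) ∈ closedBall c r)).card
      = S.card * (n/5) + (S.filter (fun k : Fin 5 => (k : ℕ) < n % 5)).card := by
    rw [hfib]
    simp only [hfib2]
    rw [Finset.sum_add_distrib, Finset.sum_const, smul_eq_mul]
    congr 1
    rw [Finset.card_filter]
  -- final arithmetic
  have hle : (Finset.univ.filter (fun i : Fin n => rtPts (res i) ∈ closedBall c r)).card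
      ≤ 3 * (n/5) + (3 * (n % 5) + 4)/5 := by
    rw [hsum]
    have hfilt' : (S.filter (fun k : Fin 5 => (k : ℕ) < n % 5)).card ≤ (3 * (n % 5) + 4)/5 := hfilt
    exact Nat.add_le_add (Nat.mul_le_mul_right _ hcard3) hfilt' 
  refine hle.trans ?_
  set m : ℕ := 3 * (n/5) + (3 * (n % 5) + 4)/5 with hm
  have h5m : 5 * m ≤ 3 * n + 4 := by omega
  rcases Nat.eq_zero_or_pos m with h0 | h0
  · omega
  · have : (m - 1 : ℕ) < ⌈(3 * n : ℝ) / 5⌉₊ := by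
      rw [Nat.lt_ceil]
      rw [lt_div_iff₀ (by norm_num : (0:ℝ) < 5)]
      have : ((m - 1 : ℕ) : ℝ) * 5 = ((m - 1) * 5 : ℕ) := by push_cast; ring
      rw [this]
      exact_mod_cast (by omega : (m - 1) * 5 < 3 * n)
    omega
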